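/- There exists a constant C > 0 such that the following holds for every integer m ≥ 2. Let n = 2^{2m}, N = n², and let B ⊆ 𝔽₂^n be a binary code of size N in which, for every codeword x, the number of codewords at Hamming distance w from x equals A_w, where A₀ = A_n = 1, A_{(n−√n)/2} = A_{(n+√n)/2} = n(n/2 − 1), A_{n/2} = 2(n−1), and A_w = 0 for all other w (the Kerdock distance distribution). Then the sum of distances of the spherical embedding of B satisfies | Σ_{x∈B} Σ_{y∈B} ‖x̃ − ỹ‖ − √2·N² + N^{3/2}/(4√2) | ≤ C·N. -/

import Mathlib

/-!
Since `‖x̃ − ỹ‖ = 2√(d(x, y)/n)`, the distances from a fixed codeword to all of `B` are determined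
by the distance distribution, so every row of the double sum equals the same explicit quantity.
With `k = √n` the two middle weights `(n ∓ k)/2` contribute `√2·(√(1 − 1/k) + √(1 + 1/k))`, and
`√(1 − t) + √(1 + t) = 2 − t²/4 + O(t⁴)`: the `t²/4` term produces the `−N^{3/2}/(4√2)` correction,
and everything left over is `O(n²) = O(N)`.
-/

/-- The spherical embedding of a binary word `x ∈ 𝔽₂ⁿ`: the unit vector with
coordinates `x̃ⱼ = (−1)^{xⱼ}/√n`. -/
noncomputable def binEmbed {n : ℕ} (x : Fin n → ZMod 2) : EuclideanSpace ℝ (Fin n) :=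
  WithLp.toLp 2 fun j => (-1 : ℝ) ^ ((x j).val) / Real.sqrt n

open Finset

lemma sq_neg_one_pow_val_sub_neg_one_pow_val (a b : ZMod 2) :
    ((-1 : ℝ) ^ a.val - (-1) ^ b.val) ^ 2 = if a = b then 0 else 4 := by
  obtain rfl | rfl : a = 0 ∨ a = 1 := by decide +revert
  all_goals obtain rfl | rfl : b = 0 ∨ b = 1 := by decide +revert
  all_goals norm_num [ZMod.val_one]

lemma norm_binEmbed_sub {n : ℕ} (x y : Fin n → ZMod 2) :
    ‖binEmbed x - binEmbed y‖ = 2 * √(hammingDist x y / n) := by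
  have hsq : ‖binEmbed x - binEmbed y‖ ^ 2 = 4 * (hammingDist x y / n) := by
    simp only [EuclideanSpace.real_norm_sq_eq, binEmbed, PiLp.sub_apply, ← sub_div, div_pow,
      Real.sq_sqrt n.cast_nonneg, ← sum_div, sq_neg_one_pow_val_sub_neg_one_pow_val,
      sum_ite, sum_const_zero, sum_const, hammingDist]
    simp [mul_div_assoc, mul_comm]
  rw [← Real.sqrt_sq (norm_nonneg _), hsq, Real.sqrt_mul (by norm_num),
    show (4 : ℝ) = 2 ^ 2 by norm_num, Real.sqrt_sq (by norm_num)]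

lemma sum_comp_eq_sum_nsmul_of_card_filter {α β M : Type*} [DecidableEq β] [AddCommMonoid M]
    {s : Finset α} {S : Finset β} {f : α → β} {A : β → ℕ}
    (hA : ∀ w, #{y ∈ s | f y = w} = A w) (hS : ∀ w ∉ S, A w = 0) (g : β → M) :
    ∑ y ∈ s, g (f y) = ∑ w ∈ S, A w • g w := by
  have hmaps : ∀ y ∈ s, f y ∈ S := fun y hy => by
    by_contra h
    have hempty := card_eq_zero.1 ((hA (f y)).trans (hS _ h))
    exact notMem_empty y (hempty ▸ mem_filter.2 ⟨hy, rfl⟩)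
  rw [← sum_fiberwise_of_maps_to hmaps]
  refine sum_congr rfl fun w _ => ?_
  rw [sum_congr rfl fun y hy => by rw [(mem_filter.1 hy).2], sum_const, hA]

lemma two_mul_sqrt_div_two (x : ℝ) : 2 * √(x / 2) = √2 * √x := by
  rw [← Real.sqrt_mul (by norm_num), show (2 : ℝ) * x = 2 ^ 2 * (x / 2) by ring,
    Real.sqrt_mul (by norm_num), Real.sqrt_sq (by norm_num)]

lemma abs_sqrt_one_sub_add_sqrt_one_add_sub_le {t : ℝ} (ht₀ : 0 ≤ t) (ht₁ : t ≤ 1) :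
    |√(1 - t) + √(1 + t) - (2 - t ^ 2 / 4)| ≤ t ^ 4 := by
  set s := √(1 - t) + √(1 + t)
  have hs₀ : 0 ≤ s := by positivity
  set u := √(1 - t ^ 2)
  have hu₀ : 0 ≤ u := Real.sqrt_nonneg _
  have hu : u ^ 2 = 1 - t ^ 2 := Real.sq_sqrt (by nlinarith)
  have hs : s ^ 2 = 2 + 2 * u := by
    have h₁ : √(1 - t) ^ 2 = 1 - t := Real.sq_sqrt (by linarith)
    have h₂ : √(1 + t) ^ 2 = 1 + t := Real.sq_sqrt (by linarith)
    have h₃ : √(1 - t) * √(1 + t) = u := by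
      rw [← Real.sqrt_mul (by linarith), show (1 - t) * (1 + t) = 1 - t ^ 2 by ring]
    linear_combination h₁ + h₂ + 2 * h₃
  have hu_le : u ≤ 1 - t ^ 2 / 2 := by nlinarith
  have hu_ge : 1 - t ^ 2 / 2 - t ^ 4 / 2 ≤ u := by nlinarith [sq_nonneg (t ^ 2)]
  rw [abs_le]
  constructor
  · nlinarith [sq_nonneg (t ^ 2), mul_nonneg (sq_nonneg t) (sq_nonneg (t ^ 2))]
  · nlinarith

lemma sq_rpow_three_div_two {x : ℝ} (hx : 0 ≤ x) : (x ^ 2) ^ ((3 : ℝ) / 2) = x ^ 3 := by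
  rw [← Real.rpow_natCast, ← Real.rpow_mul hx]; norm_num

-- The distance distribution `A_w` of a Kerdock code of length `n = k²`.
def kerdockWeight (n k w : ℕ) : ℕ :=
  if w = 0 ∨ w = n then 1
  else if w = (n - k) / 2 ∨ w = (n + k) / 2 then n * (n / 2 - 1)
  else if w = n / 2 then 2 * (n - 1)
  else 0

lemma kerdockWeight_eq_zero {n k w : ℕ}
    (hw : w ∉ ({0, (n - k) / 2, n / 2, (n + k) / 2, n} : Finset ℕ)) : kerdockWeight n k w = 0 := by
  simp only [mem_insert, mem_singleton, not_or] at hw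
  simp [kerdockWeight, hw]

lemma sum_kerdockWeight_nsmul {M : Type*} [AddCommMonoid M] {n k : ℕ} (hk : 2 ≤ k)
    (hkn : 2 * k ≤ n) (g : ℕ → M) :
    ∑ w ∈ {0, (n - k) / 2, n / 2, (n + k) / 2, n}, kerdockWeight n k w • g w =
      g 0 + (n * (n / 2 - 1)) • (g ((n - k) / 2) + g ((n + k) / 2)) + (2 * (n - 1)) • g (n / 2)
        + g n := by
  rw [sum_insert (by simp; omega), sum_insert (by simp; omega), sum_insert (by simp; omega),
    sum_insert (by simp; omega), sum_singleton]
  have h₁ : (n - k) / 2 ≠ 0 ∧ (n - k) / 2 ≠ n := by omega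
  have h₂ : n / 2 ≠ 0 ∧ n / 2 ≠ n ∧ n / 2 ≠ (n - k) / 2 ∧ n / 2 ≠ (n + k) / 2 := by omega
  have h₃ : (n + k) / 2 ≠ 0 ∧ (n + k) / 2 ≠ n := by omega
  simp only [kerdockWeight, h₁, h₂, h₃, true_or, or_true, or_self, if_true, if_false, one_smul,
    smul_add]
  abel

noncomputable def kerdockRowSum (n k : ℝ) : ℝ :=
  2 + 2 * (n - 1) * √2 + n * (n / 2 - 1) * √2 * (√(1 - 1 / k) + √(1 + 1 / k))

lemma sum_norm_binEmbed_sub_eq_kerdockRowSum {n k : ℕ} (hk : 2 ≤ k) (hk_even : Even k)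
    (hn : k ^ 2 = n) {B : Finset (Fin n → ZMod 2)} {x : Fin n → ZMod 2}
    (hB : ∀ w, #{y ∈ B | hammingDist x y = w} = kerdockWeight n k w) :
    ∑ y ∈ B, ‖binEmbed x - binEmbed y‖ = kerdockRowSum n k := by
  obtain ⟨p, hp⟩ := hk_even
  have hn' : n = 4 * p ^ 2 := by rw [← hn, hp]; ring
  have hpp : p ≤ p ^ 2 := Nat.le_self_pow two_ne_zero p
  have hlow : (((n - k) / 2 : ℕ) : ℝ) = (n - k) / 2 := by
    have h : (n - k) / 2 * 2 + k = n := by omega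
    rw [eq_div_iff two_ne_zero, eq_sub_iff_add_eq]; exact_mod_cast h
  have hhigh : (((n + k) / 2 : ℕ) : ℝ) = (n + k) / 2 := by
    have h : (n + k) / 2 * 2 = n + k := by omega
    rw [eq_div_iff two_ne_zero]; exact_mod_cast h
  have hhalf : ((n / 2 : ℕ) : ℝ) = n / 2 := by
    have h : n / 2 * 2 = n := by omega
    rw [eq_div_iff two_ne_zero]; exact_mod_cast h
  have hnk : (k : ℝ) ^ 2 = n := by exact_mod_cast hn
  have hn₀ : (n : ℝ) ≠ 0 := by rw [← hnk]; positivity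
  have hd_low : 2 * √(((n : ℝ) - k) / 2 / n) = √2 * √(1 - 1 / k) := by
    rw [← two_mul_sqrt_div_two, show ((n : ℝ) - k) / 2 / n = (1 - 1 / k) / 2 by
      rw [← hnk]; field_simp]
  have hd_high : 2 * √(((n : ℝ) + k) / 2 / n) = √2 * √(1 + 1 / k) := by
    rw [← two_mul_sqrt_div_two, show ((n : ℝ) + k) / 2 / n = (1 + 1 / k) / 2 by
      rw [← hnk]; field_simp]
  have hd_half : 2 * √((n : ℝ) / 2 / n) = √2 := by
    rw [div_right_comm, div_self hn₀, two_mul_sqrt_div_two, Real.sqrt_one, mul_one]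
  simp only [norm_binEmbed_sub]
  rw [sum_comp_eq_sum_nsmul_of_card_filter hB (fun w hw => kerdockWeight_eq_zero hw)
    (fun w : ℕ => 2 * √((w : ℝ) / n)), sum_kerdockWeight_nsmul hk (by nlinarith)]
  simp only [hlow, hhigh, hhalf, hd_low, hd_high, hd_half, nsmul_eq_mul, Nat.cast_mul,
    Nat.cast_sub (by omega : 1 ≤ n / 2), Nat.cast_sub (by omega : 1 ≤ n), div_self hn₀,
    Nat.cast_zero, zero_div, Real.sqrt_zero, Real.sqrt_one, kerdockRowSum]
  push_cast
  ring

lemma abs_sq_mul_kerdockRowSum_sub_le {n k : ℝ} (hk : 2 ≤ k) (hn : k ^ 2 = n) :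
    |n ^ 2 * kerdockRowSum n k - √2 * (n ^ 2) ^ 2 + n ^ 3 / (4 * √2)| ≤ 2 * n ^ 2 := by
  set E := √(1 - 1 / k) + √(1 + 1 / k) - (2 - (1 / k) ^ 2 / 4)
  have hE : |E| ≤ 1 / n ^ 2 := by
    have h := abs_sqrt_one_sub_add_sqrt_one_add_sub_le (t := 1 / k) (by positivity)
      (by rw [div_le_one (by positivity)]; linarith)
    calc |E| ≤ (1 / k) ^ 4 := h
      _ = 1 / n ^ 2 := by rw [← hn]; ring
  have hr₀ : 0 < √2 := by positivity
  have hr : √2 ^ 2 = 2 := Real.sq_sqrt (by norm_num)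
  have hn₄ : 4 ≤ n := by nlinarith
  have hexpand : n ^ 2 * kerdockRowSum n k - √2 * (n ^ 2) ^ 2 + n ^ 3 / (4 * √2) =
      (2 - 7 * √2 / 4) * n ^ 2 + n ^ 3 * (n / 2 - 1) * √2 * E := by
    have hk₀ : k ≠ 0 := by positivity
    simp only [kerdockRowSum, E, ← hn]
    field_simp
    linear_combination (-k ^ 2) * hr
  rw [hexpand]
  have hc : |2 - 7 * √2 / 4| ≤ 1 / 2 := by
    rw [abs_le]; constructor <;> nlinarith
  have hX : |n ^ 3 * (n / 2 - 1) * √2 * E| ≤ 3 / 4 * n ^ 2 := by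
    have hX₀ : 0 ≤ n ^ 3 * (n / 2 - 1) * √2 :=
      mul_nonneg (mul_nonneg (by positivity) (by linarith)) hr₀.le
    rw [abs_mul, abs_of_nonneg hX₀]
    calc n ^ 3 * (n / 2 - 1) * √2 * |E| ≤ n ^ 3 * (n / 2) * (3 / 2) * (1 / n ^ 2) := by
          gcongr
          · linarith
          · nlinarith
      _ = 3 / 4 * n ^ 2 := by field_simp; ring
  calc _ ≤ |2 - 7 * √2 / 4| * n ^ 2 + |n ^ 3 * (n / 2 - 1) * √2 * E| := by
        refine (abs_add_le _ _).trans_eq ?_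
        rw [abs_mul, abs_of_nonneg (sq_nonneg n)]
    _ ≤ 2 * n ^ 2 := by nlinarith [sq_nonneg n]

/-- Any binary code of length `n = 2^{2m}`, size `N = n²`, with the Kerdock distance
distribution (`A₀ = A_n = 1`, `A_{(n±√n)/2} = n(n/2−1)`, `A_{n/2} = 2(n−1)`) has
spherical sum of distances `√2·N² − N^{3/2}/(4√2) + O(N)`, uniformly in `m ≥ 2`. -/
theorem kerdock_sum_dist_asymptotics :
    ∃ C : ℝ, 0 < C ∧ ∀ m : ℕ, 2 ≤ m →
      ∀ B : Finset (Fin (2 ^ (2 * m)) → ZMod 2),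
        B.card = (2 ^ (2 * m)) ^ 2 →
        (∀ x ∈ B, ∀ w : ℕ,
          (B.filter fun y => hammingDist x y = w).card =
            (if w = 0 ∨ w = 2 ^ (2 * m) then 1
             else if w = (2 ^ (2 * m) - 2 ^ m) / 2 ∨ w = (2 ^ (2 * m) + 2 ^ m) / 2 then
               2 ^ (2 * m) * (2 ^ (2 * m) / 2 - 1)
             else if w = 2 ^ (2 * m) / 2 then 2 * (2 ^ (2 * m) - 1)
             else 0)) →
        |∑ x ∈ B, ∑ y ∈ B, ‖binEmbed x - binEmbed y‖
            - Real.sqrt 2 * (((2 ^ (2 * m) : ℝ) ^ 2) ^ 2)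
            + ((2 ^ (2 * m) : ℝ) ^ 2) ^ ((3 : ℝ) / 2) / (4 * Real.sqrt 2)|
          ≤ C * ((2 ^ (2 * m) : ℝ) ^ 2) := by
  refine ⟨2, two_pos, fun m hm B hcard hdist => ?_⟩
  have hk : 2 ≤ 2 ^ m := Nat.le_self_pow (by omega) 2
  have hk_even : Even (2 ^ m) := (Nat.even_pow' (by omega)).2 even_two
  have hn : (2 ^ m) ^ 2 = 2 ^ (2 * m) := by rw [← pow_mul, mul_comm]
  have hrow : ∀ x ∈ B, ∑ y ∈ B, ‖binEmbed x - binEmbed y‖ =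
      kerdockRowSum (2 ^ (2 * m) : ℕ) (2 ^ m : ℕ) :=
    fun x hx => sum_norm_binEmbed_sub_eq_kerdockRowSum hk hk_even hn (hdist x hx)
  rw [sum_congr rfl hrow, sum_const, hcard, nsmul_eq_mul, sq_rpow_three_div_two (by positivity)]
  push_cast
  exact abs_sq_mul_kerdockRowSum_sub_le (by exact_mod_cast hk) (by exact_mod_cast hn)
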